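/- arXiv:2512.06805 — 4 statements merged into one kernel-verified Lean document; each statement's English description precedes it below -/
import Mathlib

section
/- Let u ∈ L²(ℝ) and γ a kernel as in the standing assumptions with nonnegative derivative measure γ'_ε (where γ_ε(x) = ε⁻¹γ(x/ε)), and let w := γ_ε * u. Then ∫_ℝ u(x) ∂_x w(x) dx = -½ ∫_{-∞}^0 ( ∫_ℝ (u(x - s) - u(x))² dx ) γ'_ε(s) ds. In particular, 0 ≤ ∫_{-∞}^0 ρ(s) γ'_ε(s) ds ≤ 2 |∫_ℝ u ∂_x w dx| where ρ(s) := ∫ (u(x-s) - u(x))² dx. -/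
/-!
Expanding the square, `∫ (u(x - s) - u x)² dx = 2‖u‖₂² - 2 ∫ u x u(x - s) dx` by translation
invariance of Lebesgue measure, so integrating against `μ` and using Fubini gives
`-½ ∫ ρ dμ = ∫∫ u x u(x - s) dμ(s) dx - μ(ℝ) ‖u‖₂²`. This is `∫ u ∂ₓw` as soon as
`γ_ε(0) = μ(ℝ)`, which holds because `γ_ε(a) = γ_ε(0) - μ(a, 0]` has a limit at `-∞` that must
vanish, `γ_ε` being integrable.
-/

open MeasureTheory Filter Set Topology
open scoped ENNReal

namespace MeasureTheory

variable {G : Type*} [AddGroup G] [MeasurableSpace G] [MeasurableAdd₂ G]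
  {ν : Measure G} [ν.IsAddRightInvariant] {u : G → ℝ}

theorem MemLp.comp_sub_right {p : ℝ≥0∞} (hu : MemLp u p ν) (s : G) :
    MemLp (fun x => u (x - s)) p ν :=
  hu.comp_measurePreserving (measurePreserving_sub_right ν s)

theorem MemLp.integrable_mul_comp_sub (hu : MemLp u 2 ν) (s : G) :
    Integrable (fun x => u x * u (x - s)) ν :=
  hu.integrable_mul (hu.comp_sub_right s)

theorem MemLp.integral_sub_comp_sub_sq (hu : MemLp u 2 ν) (s : G) :
    ∫ x, (u (x - s) - u x) ^ 2 ∂ν = 2 * ∫ x, u x ^ 2 ∂ν - 2 * ∫ x, u x * u (x - s) ∂ν := by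
  have hsq := hu.integrable_sq
  have hsq_shift := (hu.comp_sub_right s).integrable_sq
  have hsum : Integrable (fun x => u (x - s) ^ 2 + u x ^ 2) ν := hsq_shift.add hsq
  have hexpand : (fun x => (u (x - s) - u x) ^ 2) =
      fun x => (u (x - s) ^ 2 + u x ^ 2) - 2 * (u x * u (x - s)) := by
    funext x; ring
  rw [hexpand, integral_sub hsum ((hu.integrable_mul_comp_sub s).const_mul 2),
    integral_add hsq_shift hsq, integral_const_mul, integral_sub_right_eq_self (fun x => u x ^ 2) s]
  ring

theorem MemLp.integrable_prod_mul_comp_sub [MeasurableNeg G] [SFinite ν] (hu : MemLp u 2 ν)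
    (μ : Measure G) [IsFiniteMeasure μ] :
    Integrable (fun p : G × G => u p.1 * u (p.1 - p.2)) (ν.prod μ) := by
  have hmeas : AEStronglyMeasurable (fun p : G × G => u p.1 * u (p.1 - p.2)) (ν.prod μ) :=
    (hu.aestronglyMeasurable.comp_fst).mul
      (hu.aestronglyMeasurable.comp_quasiMeasurePreserving
        (quasiMeasurePreserving_sub_of_right_invariant ν μ))
  have hdom : Integrable (fun p : G × G => u p.1 ^ 2 + 1 * u (p.1 - p.2) ^ 2) (ν.prod μ) :=
    (hu.integrable_sq.comp_fst μ).add
      ((integrable_const (1 : ℝ)).convolution_integrand (ContinuousLinearMap.mul ℝ ℝ)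
        hu.integrable_sq)
  refine hdom.mono' hmeas (Eventually.of_forall fun p => ?_)
  rw [Real.norm_eq_abs, abs_mul]
  nlinarith [sq_nonneg (|u p.1| - |u (p.1 - p.2)|), sq_abs (u p.1), sq_abs (u (p.1 - p.2))]

theorem MemLp.integral_mul_integral_comp_sub_sub_eq [MeasurableNeg G] [SFinite ν]
    (hu : MemLp u 2 ν) (μ : Measure G) [IsFiniteMeasure μ] :
    ∫ x, u x * ((∫ s, u (x - s) ∂μ) - μ.real univ * u x) ∂ν =
      -(1 / 2) * ∫ s, (∫ x, (u (x - s) - u x) ^ 2 ∂ν) ∂μ := by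
  have hprod := hu.integrable_prod_mul_comp_sub μ
  have hsq := hu.integrable_sq
  set I := ∫ x, u x ^ 2 ∂ν
  set C := fun s => ∫ x, u x * u (x - s) ∂ν
  have hlhs : ∫ x, u x * ((∫ s, u (x - s) ∂μ) - μ.real univ * u x) ∂ν =
      ∫ s, C s ∂μ - μ.real univ * I := by
    have hpt : (fun x => u x * ((∫ s, u (x - s) ∂μ) - μ.real univ * u x)) =
        fun x => (∫ s, u x * u (x - s) ∂μ) - μ.real univ * u x ^ 2 := by
      funext x; rw [integral_const_mul]; ring
    rw [hpt, integral_sub hprod.integral_prod_left (hsq.const_mul _), integral_const_mul,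
      integral_integral_swap hprod]
  have hrhs :
      ∫ s, (∫ x, (u (x - s) - u x) ^ 2 ∂ν) ∂μ = 2 * (μ.real univ * I) - 2 * ∫ s, C s ∂μ := by
    simp_rw [hu.integral_sub_comp_sub_sq]
    rw [integral_sub (integrable_const _) (hprod.integral_prod_right.const_mul 2),
      integral_const, integral_const_mul, smul_eq_mul]
    ring
  rw [hlhs, hrhs]
  ring

end MeasureTheory

theorem eq_measureReal_univ_of_sub_eq_measure_Ioc {f : ℝ → ℝ} {b : ℝ}
    (hf : IntegrableOn f (Iic b)) {μ : Measure ℝ} [IsFiniteMeasure μ] (hμ : μ (Ioi b) = 0)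
    (h : ∀ a ≤ b, f b - f a = μ.real (Ioc a b)) : f b = μ.real univ := by
  have hlim : Tendsto f atBot (𝓝 (f b - μ.real (Iic b))) := by
    refine (tendsto_const_nhds.sub ((ENNReal.tendsto_toReal (measure_ne_top μ _)).comp
      (tendsto_measure_Ioc_atBot μ b))).congr' ?_
    filter_upwards [eventually_le_atBot b] with a ha
    show f b - μ.real (Ioc a b) = f a
    linarith [h a ha]
  have hvolume : ∀ s ∈ (atBot : Filter ℝ), volume s = ⊤ := by
    intro s hs
    obtain ⟨c, hc⟩ := mem_atBot_sets.1 hs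
    rw [← top_le_iff, ← Real.volume_Iic (a := c)]
    exact measure_mono hc
  have hzero := IntegrableAtFilter.eq_zero_of_tendsto ⟨Iic b, Iic_mem_atBot b, hf⟩ hvolume hlim
  rw [sub_eq_zero] at hzero
  rw [hzero, measureReal_congr (ae_eq_univ.2 (by rwa [compl_Iic]))]

theorem stmt8_general (γ : ℝ → ℝ) (ε : ℝ) (hε : 0 < ε) (u : ℝ → ℝ)
    (hint : Integrable γ)
    (hu2 : MemLp u 2 (volume : Measure ℝ))
    (γε : ℝ → ℝ) (hγε : ∀ x, γε x = ε⁻¹ * γ (x / ε))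
    (μ : Measure ℝ) [IsFiniteMeasure μ]
    (hμsupp : μ (Ioi 0) = 0)
    (hderiv : ∀ a : ℝ, a ≤ 0 → γε 0 - γε a = (μ (Ioc a 0)).toReal)
    (Dw : ℝ → ℝ)
    (hDw : ∀ x, Dw x = (∫ s : ℝ, u (x - s) ∂μ) - γε 0 * u x) :
    (∫ x : ℝ, u x * Dw x
        = -(1/2) * ∫ s : ℝ, (∫ x : ℝ, (u (x - s) - u x)^2) ∂μ) ∧
    0 ≤ ∫ s : ℝ, (∫ x : ℝ, (u (x - s) - u x)^2) ∂μ ∧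
    ∫ s : ℝ, (∫ x : ℝ, (u (x - s) - u x)^2) ∂μ ≤ 2 * |∫ x : ℝ, u x * Dw x| := by
  have hγε_int : Integrable γε := by
    rw [show γε = fun x => ε⁻¹ * γ (x / ε) from funext hγε]
    exact (hint.comp_div hε.ne').const_mul ε⁻¹
  have hγε0 : γε 0 = μ.real univ :=
    eq_measureReal_univ_of_sub_eq_measure_Ioc hγε_int.integrableOn hμsupp hderiv
  have hidentity : ∫ x, u x * Dw x = -(1 / 2) * ∫ s, (∫ x, (u (x - s) - u x) ^ 2) ∂μ := by
    simp_rw [hDw, hγε0]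
    exact hu2.integral_mul_integral_comp_sub_sub_eq μ
  have hnonneg : 0 ≤ ∫ s, (∫ x, (u (x - s) - u x) ^ 2) ∂μ :=
    integral_nonneg fun s => integral_nonneg fun x => sq_nonneg _
  refine ⟨hidentity, hnonneg, ?_⟩
  rw [hidentity, abs_of_nonpos (by linarith)]
  linarith

/-- Let `u ∈ L²(ℝ)`, `γ` a standing kernel with rescaling `γ_ε(x) = ε⁻¹γ(x/ε)`
whose (nonnegative) derivative measure is `μ` (supported in `(-∞,0]`), and `w = γ_ε * u`.
Via the Volterra identity, the derivative of `w` is `Dw(x) = ∫ u(x-s) dμ(s) - γ_ε(0) u(x)`, and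
`∫ u ∂ₓw dx = -½ ∫ ρ(s) dμ(s)` where `ρ(s) = ∫ (u(x-s) - u(x))² dx`; in particular
`0 ≤ ∫ ρ dμ ≤ 2 |∫ u ∂ₓw dx|`. -/
theorem stmt8 (γ : ℝ → ℝ) (ε : ℝ) (hε : 0 < ε) (u : ℝ → ℝ)
    (hγpos : ∀ z, 0 ≤ γ z)
    (hsupp : Function.support γ ⊆ Iic 0)
    (hint : Integrable γ)
    (hmass : ∫ z in Iic (0:ℝ), γ z = 1)
    (hmono : MonotoneOn γ (Iic 0))
    (hconv : ConvexOn ℝ (Iic 0) γ)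
    (hBV : eVariationOn γ univ ≠ ⊤)
    (hu2 : MemLp u 2 (volume : Measure ℝ))
    (γε : ℝ → ℝ) (hγε : ∀ x, γε x = ε⁻¹ * γ (x / ε))
    (μ : Measure ℝ) [IsFiniteMeasure μ]
    (hμsupp : μ (Ioi 0) = 0)
    (hderiv : ∀ a : ℝ, a ≤ 0 → γε 0 - γε a = (μ (Ioc a 0)).toReal)
    (w Dw : ℝ → ℝ)
    (hw : ∀ x, w x = ∫ y : ℝ, γε (x - y) * u y)
    (hDw : ∀ x, Dw x = (∫ s : ℝ, u (x - s) ∂μ) - γε 0 * u x)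
    (hderivw : ∀ x, HasDerivAt w (Dw x) x) :
    (∫ x : ℝ, u x * Dw x
        = -(1/2) * ∫ s : ℝ, (∫ x : ℝ, (u (x - s) - u x)^2) ∂μ) ∧
    0 ≤ ∫ s : ℝ, (∫ x : ℝ, (u (x - s) - u x)^2) ∂μ ∧
    ∫ s : ℝ, (∫ x : ℝ, (u (x - s) - u x)^2) ∂μ ≤ 2 * |∫ x : ℝ, u x * Dw x| :=
  stmt8_general γ ε hε u hint hu2 γε hγε μ hμsupp hderiv Dw hDw
end

section
/- Let γ satisfy the standing kernel assumptions, ε > 0, γ_ε(x) = ε⁻¹γ(x/ε), and let u ∈ L²(ℝ) satisfy, for some constant B ≥ 0, the bound ∫_{-∞}^0 ρ(s) γ'_ε(s) ds ≤ 2B, where ρ(s) = ∫_ℝ (u(x-s) - u(x))² dx. Let δ_γ, η_γ > 0 be such that h(z) := ∫_{-∞}^0 2(1-cos(zs)) γ'(s) ds ≥ η_γ δ² for all |z| ≥ δ, 0 < δ < δ_γ. Then for every δ ∈ (0, δ_γ), ∫_{|εξ| ≥ δ} |û(ξ)|² dξ ≤ (2ε/(η_γ δ²)) B. -/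
open MeasureTheory Filter Set Topology Real FourierTransform
open scoped ContDiff

/-!
Since translation by `c` multiplies `û` by `e^{-icξ}`, Plancherel turns the translation energy
`ρ(c) = ∫ |u(x - c) - u(x)|² dx` into `∫ 2(1 - cos(cξ)) |û(ξ)|² dξ`. Integrating `ρ(εs)` against
`μ` and exchanging the integrals gives `∫ h(εξ) |û(ξ)|² dξ ≤ 2εB`, and on `{|εξ| ≥ δ}` the
multiplier `h(εξ)` is at least `η_γ δ²`.
-/

theorem MeasureTheory.L2.integral_norm_sq_eq {α 𝕜 E : Type*} [MeasurableSpace α] {μ : Measure α}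
    [RCLike 𝕜] [NormedAddCommGroup E] [InnerProductSpace 𝕜 E]
    (f : Lp E 2 μ) : ∫ x, ‖f x‖ ^ 2 ∂μ = ‖f‖ ^ 2 := by
  have h := L2.inner_def (𝕜 := 𝕜) f f
  simp_rw [inner_self_eq_norm_sq_to_K] at h
  apply RCLike.ofReal_injective (K := 𝕜)
  rw [← integral_ofReal]
  push_cast
  exact h.symm

section Plancherel

variable {V F : Type*} [NormedAddCommGroup V] [InnerProductSpace ℝ V] [FiniteDimensional ℝ V]
  [MeasurableSpace V] [BorelSpace V]
  [NormedAddCommGroup F] [InnerProductSpace ℂ F] [CompleteSpace F]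
  {f : V → F}

-- Both sides induce the same tempered distribution: against a test function `g`, move `𝓕` onto
-- `g` on either side.
theorem MeasureTheory.MemLp.fourier_toLp_ae_eq (hf1 : Integrable f) (hf2 : MemLp f 2) :
    ((𝓕 (hf2.toLp f) : Lp F 2 (volume : Measure V)) : V → F) =ᵐ[volume] 𝓕 f := by
  have hcont : Continuous (𝓕 f) :=
    VectorFourier.fourierIntegral_continuous Real.continuous_fourierChar continuous_inner hf1
  refine ae_eq_of_integral_contDiff_smul_eq ((Lp.memLp _).locallyIntegrable one_le_two)
    hcont.locallyIntegrable fun g g_smooth g_cpt => ?_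
  have hg₁ : HasCompactSupport (Complex.ofRealCLM ∘ g) := g_cpt.comp_left rfl
  have hg₂ : ContDiff ℝ ∞ (Complex.ofRealCLM ∘ g) := by fun_prop
  set G := hg₁.toSchwartzMap hg₂
  calc ∫ x, g x • ((𝓕 (hf2.toLp f) : Lp F 2 (volume : Measure V)) : V → F) x
      = Lp.toTemperedDistribution (𝓕 (hf2.toLp f)) G := by simp [G]
    _ = ∫ x, 𝓕 G x • f x := by
      rw [← Lp.fourier_toTemperedDistribution_eq, TemperedDistribution.fourier_apply,
        Lp.toTemperedDistribution_apply]
      exact integral_congr_ae (by filter_upwards [hf2.coeFn_toLp] with x hx; rw [hx])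
    _ = ∫ x, G x • 𝓕 f x := by
      simpa using! VectorFourier.integral_fourierIntegral_smul_eq_flip (L := innerₗ V)
        Real.continuous_fourierChar continuous_inner G.integrable hf1
    _ = ∫ x, g x • 𝓕 f x := by simp [G]

theorem MeasureTheory.MemLp.fourier (hf1 : Integrable f) (hf2 : MemLp f 2) : MemLp (𝓕 f) 2 :=
  (Lp.memLp _).ae_eq (hf2.fourier_toLp_ae_eq hf1)

theorem MeasureTheory.MemLp.integral_norm_fourier_sq (hf1 : Integrable f) (hf2 : MemLp f 2) :
    ∫ ξ, ‖𝓕 f ξ‖ ^ 2 = ∫ x, ‖f x‖ ^ 2 := by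
  calc ∫ ξ, ‖𝓕 f ξ‖ ^ 2
      = ∫ ξ, ‖((𝓕 (hf2.toLp f) : Lp F 2 (volume : Measure V)) : V → F) ξ‖ ^ 2 :=
        integral_congr_ae (by filter_upwards [hf2.fourier_toLp_ae_eq hf1] with ξ h; rw [h])
    _ = ∫ x, ‖f x‖ ^ 2 := by
        rw [L2.integral_norm_sq_eq (𝕜 := ℂ), Lp.norm_fourier_eq, ← L2.integral_norm_sq_eq (𝕜 := ℂ)]
        exact integral_congr_ae (by filter_upwards [hf2.coeFn_toLp] with x h; rw [h])

end Plancherel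

theorem Complex.norm_exp_neg_I_mul_ofReal_sub_one_sq (θ : ℝ) :
    ‖Complex.exp (-(Complex.I * θ)) - 1‖ ^ 2 = 2 * (1 - Real.cos θ) := by
  rw [← mul_neg, ← Complex.ofReal_neg, Complex.norm_exp_I_mul_ofReal_sub_one, norm_mul,
    mul_pow, Real.norm_eq_abs, sq_abs, neg_div, Real.sin_neg, norm_neg, Real.norm_eq_abs, sq_abs,
    show Real.cos θ = Real.cos (2 * (θ / 2)) by ring_nf, Real.cos_two_mul]
  linarith [Real.sin_sq_add_cos_sq (θ / 2)]

/-- `û(ξ) = (2π)^{-1/2} ∫ e^{-iξx} f(x) dx`; Mathlib's `𝓕` uses the character `e^{-2πixξ}`. -/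
noncomputable def unitaryFourier (f : ℝ → ℂ) (ξ : ℝ) : ℂ :=
  (Real.sqrt (2 * π))⁻¹ • ∫ x : ℝ, Complex.exp (-(Complex.I * (ξ : ℂ) * (x : ℂ))) * f x

namespace unitaryFourier

variable {f g : ℝ → ℂ}

theorem eq_fourier (f : ℝ → ℂ) (ξ : ℝ) :
    unitaryFourier f ξ = (Real.sqrt (2 * π))⁻¹ • 𝓕 f (ξ / (2 * π)) := by
  rw [unitaryFourier, Real.fourier_real_eq_integral_exp_smul]
  congr 2 with x
  rw [smul_eq_mul]
  congr 2
  push_cast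
  field_simp

theorem norm_sq_eq (f : ℝ → ℂ) (ξ : ℝ) :
    ‖unitaryFourier f ξ‖ ^ 2 = (2 * π)⁻¹ * ‖𝓕 f (ξ / (2 * π))‖ ^ 2 := by
  rw [eq_fourier, norm_smul, mul_pow, norm_inv, Real.norm_eq_abs,
    abs_of_nonneg (Real.sqrt_nonneg _), inv_pow, Real.sq_sqrt (by positivity)]

theorem continuous (hf : Integrable f) : Continuous (unitaryFourier f) := by
  have hcont : Continuous (𝓕 f) :=
    VectorFourier.fourierIntegral_continuous Real.continuous_fourierChar continuous_inner hf
  rw [show unitaryFourier f = fun ξ => (Real.sqrt (2 * π))⁻¹ • 𝓕 f (ξ / (2 * π)) from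
    funext (eq_fourier f)]
  exact (hcont.comp (continuous_id.div_const _)).const_smul (Real.sqrt (2 * π))⁻¹

theorem integrable_norm_sq (hf1 : Integrable f) (hf2 : MemLp f 2) :
    Integrable fun ξ => ‖unitaryFourier f ξ‖ ^ 2 := by
  simp_rw [norm_sq_eq]
  exact (((hf2.fourier hf1).norm.integrable_sq).comp_div (by positivity)).const_mul _

theorem integral_norm_sq (hf1 : Integrable f) (hf2 : MemLp f 2) :
    ∫ ξ, ‖unitaryFourier f ξ‖ ^ 2 = ∫ x, ‖f x‖ ^ 2 := by
  simp_rw [norm_sq_eq]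
  rw [integral_const_mul, Measure.integral_comp_div (fun w => ‖𝓕 f w‖ ^ 2),
    hf2.integral_norm_fourier_sq hf1, smul_eq_mul, abs_of_pos (by positivity), ← mul_assoc,
    inv_mul_cancel₀ (by positivity), one_mul]

theorem comp_sub_right (f : ℝ → ℂ) (c ξ : ℝ) :
    unitaryFourier (fun x => f (x - c)) ξ =
      Complex.exp (-(Complex.I * ξ * c)) * unitaryFourier f ξ := by
  rw [unitaryFourier, unitaryFourier, mul_smul_comm, ← integral_const_mul,
    ← integral_add_right_eq_self _ c]
  congr 2 with x
  rw [add_sub_cancel_right, ← mul_assoc, ← Complex.exp_add]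
  push_cast
  ring_nf

theorem integrable_exp_mul (hf : Integrable f) (ξ : ℝ) :
    Integrable fun x : ℝ => Complex.exp (-(Complex.I * ξ * x)) * f x :=
  hf.bdd_mul (c := 1) (by fun_prop : Continuous _).aestronglyMeasurable
    (ae_of_all _ fun x => by simp [Complex.norm_exp])

theorem sub (hf : Integrable f) (hg : Integrable g) (ξ : ℝ) :
    unitaryFourier (fun x => f x - g x) ξ = unitaryFourier f ξ - unitaryFourier g ξ := by
  rw [unitaryFourier, unitaryFourier, unitaryFourier, ← smul_sub,
    ← integral_sub (integrable_exp_mul hf ξ) (integrable_exp_mul hg ξ)]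
  simp_rw [mul_sub]

end unitaryFourier

theorem mul_setIntegral_le_integral_mul {α : Type*} [MeasurableSpace α] {μ : Measure α}
    {w h : α → ℝ} {S : Set α} {c : ℝ} (hS : MeasurableSet S) (hw0 : 0 ≤ w) (hh0 : 0 ≤ h)
    (hw : Integrable w μ) (hhw : Integrable (h * w) μ) (hc : ∀ x ∈ S, c ≤ h x) :
    c * ∫ x in S, w x ∂μ ≤ ∫ x, h x * w x ∂μ :=
  calc c * ∫ x in S, w x ∂μ = ∫ x in S, c * w x ∂μ := (integral_const_mul c w).symm
    _ ≤ ∫ x in S, h x * w x ∂μ :=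
      setIntegral_mono_on (hw.const_mul c).integrableOn hhw.integrableOn hS
        fun x hx => mul_le_mul_of_nonneg_right (hc x hx) (hw0 x)
    _ ≤ ∫ x, h x * w x ∂μ :=
      setIntegral_le_integral hhw (ae_of_all _ fun x => mul_nonneg (hh0 x) (hw0 x))

section TranslationEnergy

variable {f : ℝ → ℂ}

theorem integral_norm_comp_sub_sub_sq (hf1 : Integrable f) (hf2 : MemLp f 2) (c : ℝ) :
    ∫ x, ‖f (x - c) - f x‖ ^ 2 = ∫ ξ, 2 * (1 - Real.cos (ξ * c)) * ‖unitaryFourier f ξ‖ ^ 2 := by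
  have hg1 : Integrable fun x => f (x - c) - f x := (hf1.comp_sub_right c).sub hf1
  have hg2 : MemLp (fun x => f (x - c) - f x) 2 :=
    (hf2.comp_measurePreserving (measurePreserving_sub_right volume c)).sub hf2
  rw [← unitaryFourier.integral_norm_sq hg1 hg2]
  congr with ξ
  rw [unitaryFourier.sub (hf1.comp_sub_right c) hf1, unitaryFourier.comp_sub_right, ← sub_one_mul,
    norm_mul, mul_pow, mul_assoc, ← Complex.ofReal_mul,
    Complex.norm_exp_neg_I_mul_ofReal_sub_one_sq]

variable (μ : Measure ℝ) [IsFiniteMeasure μ] (ε : ℝ)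

theorem integrable_one_sub_cos_mul_norm_unitaryFourier_sq (hf1 : Integrable f) (hf2 : MemLp f 2) :
    Integrable (fun p : ℝ × ℝ => 2 * (1 - Real.cos (ε * p.1 * p.2)) * ‖unitaryFourier f p.1‖ ^ 2)
      (volume.prod μ) := by
  refine Integrable.mono' ((unitaryFourier.integrable_norm_sq hf1 hf2).mul_prod
    (integrable_const (4 : ℝ) : Integrable _ μ)) ?_ (ae_of_all _ fun p => ?_)
  · exact (by fun_prop : Continuous fun p : ℝ × ℝ => 2 * (1 - Real.cos (ε * p.1 * p.2))).mul
      (((unitaryFourier.continuous hf1).comp continuous_fst).norm.pow 2) |>.aestronglyMeasurable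
  · have hcos_le := Real.cos_le_one (ε * p.1 * p.2)
    have hcos_ge := Real.neg_one_le_cos (ε * p.1 * p.2)
    rw [Real.norm_eq_abs, abs_of_nonneg (by positivity)]
    nlinarith [sq_nonneg ‖unitaryFourier f p.1‖]

theorem integral_integral_one_sub_cos_mul_norm_unitaryFourier_sq (hf1 : Integrable f)
    (hf2 : MemLp f 2) :
    ∫ ξ, ∫ s, 2 * (1 - Real.cos (ε * ξ * s)) * ‖unitaryFourier f ξ‖ ^ 2 ∂μ =
      ∫ s, (∫ x, ‖f (x - ε * s) - f x‖ ^ 2) ∂μ := by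
  rw [integral_integral_swap
    (integrable_one_sub_cos_mul_norm_unitaryFourier_sq μ ε hf1 hf2)]
  congr 1 with s
  rw [integral_norm_comp_sub_sub_sq hf1 hf2]
  simp_rw [mul_right_comm ε, mul_comm _ (ε * s)]

theorem mul_setIntegral_norm_unitaryFourier_sq_le (hf1 : Integrable f) (hf2 : MemLp f 2)
    {S : Set ℝ} {c : ℝ} (hS : MeasurableSet S)
    (hlow : ∀ ξ ∈ S, c ≤ ∫ s, 2 * (1 - Real.cos (ε * ξ * s)) ∂μ) :
    c * ∫ ξ in S, ‖unitaryFourier f ξ‖ ^ 2 ≤ ∫ s, (∫ x, ‖f (x - ε * s) - f x‖ ^ 2) ∂μ := by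
  set h : ℝ → ℝ := fun ξ => ∫ s, 2 * (1 - Real.cos (ε * ξ * s)) ∂μ
  have hmul : ∀ ξ, ∫ s, 2 * (1 - Real.cos (ε * ξ * s)) * ‖unitaryFourier f ξ‖ ^ 2 ∂μ =
      h ξ * ‖unitaryFourier f ξ‖ ^ 2 := fun ξ => integral_mul_const _ _
  have hh0 : 0 ≤ h := fun ξ =>
    integral_nonneg fun s => show (0 : ℝ) ≤ _ by linarith [Real.cos_le_one (ε * ξ * s)]
  calc c * ∫ ξ in S, ‖unitaryFourier f ξ‖ ^ 2
      ≤ ∫ ξ, h ξ * ‖unitaryFourier f ξ‖ ^ 2 :=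
        mul_setIntegral_le_integral_mul hS (fun ξ => sq_nonneg _) hh0
          (unitaryFourier.integrable_norm_sq hf1 hf2)
          ((integrable_one_sub_cos_mul_norm_unitaryFourier_sq μ ε hf1 hf2).integral_prod_left.congr
            (ae_of_all _ hmul)) hlow
    _ = ∫ s, (∫ x, ‖f (x - ε * s) - f x‖ ^ 2) ∂μ := by
        rw [← integral_integral_one_sub_cos_mul_norm_unitaryFourier_sq μ ε hf1 hf2]
        exact integral_congr_ae (ae_of_all _ fun ξ => (hmul ξ).symm)

end TranslationEnergy

theorem stmt9_general (ε B δγ ηγ : ℝ) (hε : 0 < ε) (hηγ : 0 < ηγ) (u : ℝ → ℝ)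
    (μ : Measure ℝ) [IsFiniteMeasure μ]
    (hu2 : MemLp u 2 (volume : Measure ℝ))
    (hu1 : Integrable u)
    (hρbound : ε⁻¹ * ∫ s : ℝ, (∫ x : ℝ, (u (x - ε * s) - u x)^2) ∂μ ≤ 2 * B)
    (hlow : ∀ δ : ℝ, 0 < δ → δ < δγ → ∀ z : ℝ, δ ≤ |z| →
      ηγ * δ^2 ≤ ∫ s : ℝ, 2 * (1 - Real.cos (z * s)) ∂μ) :
    ∀ δ : ℝ, 0 < δ → δ < δγ →
      ∫ ξ in {ξ : ℝ | δ ≤ |ε * ξ|},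
          ‖(Real.sqrt (2 * π))⁻¹ •
            ∫ x : ℝ, Complex.exp (-(Complex.I * (ξ:ℂ) * (x:ℂ))) * (u x : ℂ)‖^2
        ≤ (2 * ε / (ηγ * δ^2)) * B := by
  intro δ hδ hδlt
  have key := mul_setIntegral_norm_unitaryFourier_sq_le μ ε (f := fun x => (u x : ℂ))
    hu1.ofReal hu2.ofReal (S := {ξ : ℝ | δ ≤ |ε * ξ|})
    (measurableSet_le measurable_const (by fun_prop)) fun ξ hξ => hlow δ hδ hδlt (ε * ξ) hξ
  have henergy : ∫ s, (∫ x, ‖(u (x - ε * s) : ℂ) - u x‖ ^ 2) ∂μ ≤ ε * (2 * B) := by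
    rw [← inv_mul_le_iff₀ hε]
    simpa only [← Complex.ofReal_sub, Complex.norm_real, Real.norm_eq_abs, sq_abs] using hρbound
  rw [div_mul_eq_mul_div, le_div_iff₀ (by positivity)]
  change (∫ ξ in {ξ : ℝ | δ ≤ |ε * ξ|}, ‖unitaryFourier (fun x => (u x : ℂ)) ξ‖ ^ 2) *
    (ηγ * δ ^ 2) ≤ 2 * ε * B
  linarith

/-- Let `γ` satisfy the standing kernel assumptions with derivative measure `μ`
(supported in `(-∞,0]`), `ε > 0`, and `u ∈ L¹ ∩ L²(ℝ)` with unitary Fourier transform `û`.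
Assume the rescaled bound `∫ ρ(s) γ'_ε(ds) = ε⁻¹ ∫ ρ(εs) dμ(s) ≤ 2B` where
`ρ(s) = ∫ (u(x-s) - u(x))² dx`, and the lower bound `h(z) ≥ η_γ δ²` for `|z| ≥ δ`,
`0 < δ < δ_γ`, with `h(z) = ∫ 2(1-cos(zs)) dμ(s)`. Then for every `δ ∈ (0, δ_γ)`,
`∫_{|εξ| ≥ δ} |û(ξ)|² dξ ≤ (2ε/(η_γ δ²)) B`. -/
theorem stmt9 (γ : ℝ → ℝ) (ε B δγ ηγ : ℝ) (hε : 0 < ε) (hB : 0 ≤ B)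
    (hδγ : 0 < δγ) (hηγ : 0 < ηγ) (u : ℝ → ℝ)
    (hγpos : ∀ z, 0 ≤ γ z)
    (hsupp : Function.support γ ⊆ Iic 0)
    (hint : Integrable γ)
    (hmass : ∫ z in Iic (0:ℝ), γ z = 1)
    (hmono : MonotoneOn γ (Iic 0))
    (hconv : ConvexOn ℝ (Iic 0) γ)
    (hBV : eVariationOn γ univ ≠ ⊤)
    (μ : Measure ℝ) [IsFiniteMeasure μ]
    (hμsupp : μ (Ioi 0) = 0)
    (hderiv : ∀ a : ℝ, a ≤ 0 → γ 0 - γ a = (μ (Ioc a 0)).toReal)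
    (hu2 : MemLp u 2 (volume : Measure ℝ))
    (hu1 : Integrable u)
    (hρbound : ε⁻¹ * ∫ s : ℝ, (∫ x : ℝ, (u (x - ε * s) - u x)^2) ∂μ ≤ 2 * B)
    (hlow : ∀ δ : ℝ, 0 < δ → δ < δγ → ∀ z : ℝ, δ ≤ |z| →
      ηγ * δ^2 ≤ ∫ s : ℝ, 2 * (1 - Real.cos (z * s)) ∂μ) :
    ∀ δ : ℝ, 0 < δ → δ < δγ →
      ∫ ξ in {ξ : ℝ | δ ≤ |ε * ξ|},
          ‖(Real.sqrt (2 * π))⁻¹ •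
            ∫ x : ℝ, Complex.exp (-(Complex.I * (ξ:ℂ) * (x:ℂ))) * (u x : ℂ)‖^2
        ≤ (2 * ε / (ηγ * δ^2)) * B :=
  stmt9_general ε B δγ ηγ hε hηγ u μ hu2 hu1 hρbound hlow
end

section
/- Let γ satisfy the standing kernel assumptions, u ∈ L²(ℝ), and w := γ_ε * u. Then in the Fourier domain ŵ(ξ) = ĝ_ε(ξ) û(ξ) with ĝ_ε(ξ) = ∫_{-∞}^0 e^{-iεξz} γ(z) dz, and ĝ_ε(ξ) ≠ 0 for every ξ ∈ ℝ and ε > 0; hence û(ξ) = ŵ(ξ)/ĝ_ε(ξ) is well defined for every ξ. -/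
/-!
The factorisation `ŵ = ĝ_ε û` is the convolution theorem for the Fourier transform, after the
substitution `z = x / ε` in the transform of `γ_ε`.

For the nonvanishing, `ĝ_ε(0) = ∫ γ = 1`. For `t ≠ 0`, the reflection `f(s) = γ(-s)` turns
`Im ∫_{-∞}^0 e^{-itz} γ(z) dz` into `± ∫_0^∞ sin(|t|s) f(s) ds`, the sine transform of a
decreasing convex function. With `h = π / |t|`, the period `[2kh, 2(k+1)h]` contributes
`∫_0^h sin(|t|s) D(s + 2kh) ds`, where `D(s) = f(s) - f(s + h) ≥ 0`, so no contribution is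
negative. Convexity makes `D` decreasing, so the first contribution can only vanish if `D = 0` on
`(0, ∞)`; then `f` is `h`-periodic and decreasing, hence constant, hence `0` by integrability,
contradicting `∫ γ = 1`.
-/

open MeasureTheory Filter Set Real FourierTransform Convolution

section FourierTransform

open Complex

theorem integral_exp_mul_eq_fourier (f : ℝ → ℂ) (ξ : ℝ) :
    ∫ x : ℝ, exp (-(I * ξ * x)) * f x = 𝓕 f (ξ / (2 * π)) := by
  rw [Real.fourier_real_eq_integral_exp_smul]
  congr 1 with x
  rw [smul_eq_mul]
  congr 2
  push_cast
  field_simp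

theorem integral_exp_mul_convolution {g u : ℝ → ℝ} (hg : Integrable g) (hu : Integrable u)
    (ξ : ℝ) :
    ∫ x : ℝ, exp (-(I * ξ * x)) * ((∫ y, g (x - y) * u y : ℝ) : ℂ)
      = (∫ x : ℝ, exp (-(I * ξ * x)) * g x) * ∫ x : ℝ, exp (-(I * ξ * x)) * u x := by
  have hconv : ∀ x, ((∫ y, g (x - y) * u y : ℝ) : ℂ)
      = ((fun x => (u x : ℂ)) ⋆[ContinuousLinearMap.mul ℂ ℂ] (fun x => (g x : ℂ))) x := by
    intro x
    rw [convolution_def, ← integral_complex_ofReal]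
    simp only [ContinuousLinearMap.mul_apply', ofReal_mul, mul_comm]
  simp_rw [hconv, integral_exp_mul_eq_fourier]
  exact (Real.fourier_mul_convolution_eq hu.ofReal hg.ofReal _).trans (mul_comm _ _)

theorem integral_exp_mul_dilation {γ : ℝ → ℝ} {ε : ℝ} (hε : 0 < ε) (ξ : ℝ) :
    ∫ x : ℝ, exp (-(I * ξ * x)) * ((ε⁻¹ * γ (x / ε) : ℝ) : ℂ)
      = ∫ z : ℝ, exp (-(I * ε * ξ * z)) * γ z := by
  have hε' : (ε : ℂ) ≠ 0 := ofReal_ne_zero.2 hε.ne'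
  have hsubst := Measure.integral_comp_div (fun z : ℝ => exp (-(I * ε * ξ * z)) * γ z) ε
  rw [abs_of_pos hε, real_smul] at hsubst
  calc ∫ x : ℝ, exp (-(I * ξ * x)) * ((ε⁻¹ * γ (x / ε) : ℝ) : ℂ)
      = (ε : ℂ)⁻¹ * ∫ x : ℝ, exp (-(I * ε * ξ * (x / ε : ℝ))) * γ (x / ε) := by
        rw [← integral_const_mul]
        congr 1 with x
        rw [show I * ε * ξ * ((x / ε : ℝ) : ℂ) = I * ξ * x by push_cast; field_simp]
        push_cast
        ring
    _ = ∫ z : ℝ, exp (-(I * ε * ξ * z)) * γ z := by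
        rw [hsubst, ← mul_assoc, inv_mul_cancel₀ hε', one_mul]

end FourierTransform

theorem ConvexOn.add_sub_le_add_sub {s : Set ℝ} {f : ℝ → ℝ} (hf : ConvexOn ℝ s f)
    {x y h : ℝ} (hx : x ∈ s) (hy : y + h ∈ s) (hxy : x ≤ y) (hh : 0 ≤ h) :
    f (x + h) - f x ≤ f (y + h) - f y := by
  rcases hxy.eq_or_lt with rfl | hxy
  · rfl
  have hd : 0 < y + h - x := by linarith
  -- `x + h` and `y` are the two convex combinations of `x` and `y + h` with swapped weights
  have ha : 0 ≤ (y - x) / (y + h - x) := by positivity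
  have hb : 0 ≤ h / (y + h - x) := by positivity
  have hab : (y - x) / (y + h - x) + h / (y + h - x) = 1 := by field_simp; ring
  have h₁ := hf.2 hx hy ha hb hab
  have h₂ := hf.2 hx hy hb ha (by rw [add_comm, hab])
  simp only [smul_eq_mul] at h₁ h₂
  rw [show (y - x) / (y + h - x) * x + h / (y + h - x) * (y + h) = x + h by field_simp; ring]
    at h₁
  rw [show h / (y + h - x) * x + (y - x) / (y + h - x) * (y + h) = y by field_simp; ring] at h₂
  have := congrArg (· * (f x + f (y + h))) hab
  simp only [one_mul] at this
  linarith

theorem ConvexOn.antitoneOn_sub_comp_add {f : ℝ → ℝ} {a h : ℝ} (hf : ConvexOn ℝ (Ici a) f)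
    (hh : 0 ≤ h) : AntitoneOn (fun s => f s - f (s + h)) (Ici a) :=
  fun x hx y (hy : a ≤ y) hxy => by
    have := hf.add_sub_le_add_sub hx (show a ≤ y + h by linarith) hxy hh
    dsimp only
    linarith

theorem AntitoneOn.eq_of_add_eq {f : ℝ → ℝ} {h : ℝ} (hf : AntitoneOn f (Ioi 0)) (hh : 0 < h)
    (hper : ∀ s > 0, f (s + h) = f s) {x y : ℝ} (hx : 0 < x) (hy : 0 < y) : f x = f y := by
  wlog hxy : x ≤ y generalizing x y
  · exact (this hy hx (le_of_not_ge hxy)).symm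
  have hiter : ∀ n : ℕ, f (x + n * h) = f x := by
    intro n
    induction n with
    | zero => simp
    | succ n ih => rw [Nat.cast_succ, add_one_mul, ← add_assoc, hper _ (by positivity), ih]
  obtain ⟨n, hn⟩ := exists_nat_ge ((y - x) / h)
  have hle : y ≤ x + n * h := by rw [div_le_iff₀ hh] at hn; linarith
  have h₁ := hf hx (hx.trans_le hxy) hxy
  have h₂ := hf hy (by positivity : (0 : ℝ) < x + n * h) hle
  rw [hiter] at h₂
  linarith

section HalfPeriod

variable {t h : ℝ}

theorem sin_mul_nonneg_of_mem_Icc (hth : t * h = π) {s : ℝ} (hs : s ∈ Icc 0 h) :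
    0 ≤ sin (t * s) := by
  have ht : 0 < t := by nlinarith [pi_pos, hs.1, hs.2]
  exact sin_nonneg_of_nonneg_of_le_pi (by nlinarith [hs.1]) (by nlinarith [hs.2])

theorem integral_sin_mul_two_half_periods (hth : t * h = π) {F : ℝ → ℝ}
    (hF : IntervalIntegrable F volume 0 (2 * h)) :
    ∫ s in (0)..2 * h, sin (t * s) * F s = ∫ s in (0)..h, sin (t * s) * (F s - F (s + h)) := by
  have hg : IntervalIntegrable (fun s => sin (t * s) * F s) volume 0 (2 * h) :=
    hF.continuousOn_mul (by fun_prop)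
  have hmid : h ∈ uIcc 0 (2 * h) := by
    rcases le_total 0 h with h0 | h0
    · exact mem_uIcc_of_le h0 (by linarith)
    · exact mem_uIcc_of_ge (by linarith) h0
  have hg₁ := hg.mono_set (uIcc_subset_uIcc left_mem_uIcc hmid)
  have hg₂ := hg.mono_set (uIcc_subset_uIcc hmid right_mem_uIcc)
  have hsin_shift : ∀ s, sin (t * (s + h)) * F (s + h) = -(sin (t * s) * F (s + h)) :=
    fun s => by rw [mul_add, hth, sin_add_pi, neg_mul]
  have hg₂' : IntervalIntegrable (fun s => -(sin (t * s) * F (s + h))) volume 0 h := by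
    have := hg₂.comp_add_right h
    rw [sub_self, two_mul, add_sub_cancel_right] at this
    simpa only [hsin_shift] using this
  have hshift :
      ∫ s in h..2 * h, sin (t * s) * F s = ∫ s in (0)..h, -(sin (t * s) * F (s + h)) := by
    have := intervalIntegral.integral_comp_add_right (fun s => sin (t * s) * F s) h
      (a := 0) (b := h)
    rw [zero_add, ← two_mul] at this
    simp only [← this, hsin_shift]
  rw [← intervalIntegral.integral_add_adjacent_intervals hg₁ hg₂, hshift,
    ← intervalIntegral.integral_add hg₁ hg₂']
  congr 1 with s
  ring

theorem integral_sin_mul_period (hth : t * h = π) (k : ℕ) {f : ℝ → ℝ}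
    (hf : IntervalIntegrable f volume (k * (2 * h)) ((k + 1 : ℕ) * (2 * h))) :
    ∫ s in k * (2 * h)..(k + 1 : ℕ) * (2 * h), sin (t * s) * f s
      = ∫ s in (0)..h, sin (t * s) * (f (s + k * (2 * h)) - f (s + k * (2 * h) + h)) := by
  have hend : 2 * h + k * (2 * h) = (k + 1 : ℕ) * (2 * h) := by push_cast; ring
  have hshift := intervalIntegral.integral_comp_add_right (fun s => sin (t * s) * f s)
    (k * (2 * h)) (a := 0) (b := 2 * h)
  have hF : IntervalIntegrable (fun s => f (s + k * (2 * h))) volume 0 (2 * h) := by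
    have := hf.comp_add_right (k * (2 * h))
    rwa [sub_self, ← hend, add_sub_cancel_right] at this
  rw [zero_add, hend] at hshift
  rw [← hshift]
  calc ∫ s in (0)..2 * h, sin (t * (s + k * (2 * h))) * f (s + k * (2 * h))
      = ∫ s in (0)..2 * h, sin (t * s) * f (s + k * (2 * h)) := by
        congr 1 with s
        rw [mul_add, show t * (k * (2 * h)) = k * (2 * π) by rw [← hth]; ring,
          sin_add_nat_mul_two_pi]
    _ = _ := by
        simpa only [add_right_comm _ h] using integral_sin_mul_two_half_periods hth hF

theorem integral_sin_mul_pos_of_antitoneOn (hth : t * h = π) {D : ℝ → ℝ}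
    (hD : AntitoneOn D (Icc 0 h)) (hD₀ : 0 ≤ D h) {s₀ : ℝ} (hs₀ : s₀ ∈ Ioo 0 h)
    (hpos : 0 < D s₀) : 0 < ∫ s in (0)..h, sin (t * s) * D s := by
  have ht : 0 < t := by nlinarith [pi_pos, hs₀.1, hs₀.2]
  have hint : ∀ {a b}, a ∈ Icc 0 h → b ∈ Icc 0 h →
      IntervalIntegrable (fun s => sin (t * s) * D s) volume a b := fun ha hb =>
    (hD.mono (uIcc_subset_Icc ha hb)).intervalIntegrable.continuousOn_mul (by fun_prop)
  have hs₀' : s₀ ∈ Icc 0 h := Ioo_subset_Icc_self hs₀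
  have h₀ : (0 : ℝ) ∈ Icc 0 h := left_mem_Icc.2 (hs₀.1.trans hs₀.2).le
  have h₁ : h ∈ Icc 0 h := right_mem_Icc.2 (hs₀.1.trans hs₀.2).le
  rw [← intervalIntegral.integral_add_adjacent_intervals (hint h₀ hs₀') (hint hs₀' h₁)]
  refine add_pos_of_pos_of_nonneg ?_ ?_
  · refine intervalIntegral.intervalIntegral_pos_of_pos_on (hint h₀ hs₀') (fun s hs => ?_)
      hs₀.1
    have hs' : s ∈ Icc 0 h := ⟨hs.1.le, hs.2.le.trans hs₀.2.le⟩
    refine mul_pos (sin_pos_of_pos_of_lt_pi (mul_pos ht hs.1) ?_)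
      (hpos.trans_le (hD hs' hs₀' hs.2.le))
    nlinarith [hs.2, hs₀.2]
  · refine intervalIntegral.integral_nonneg hs₀.2.le (fun s hs => ?_)
    have hs' : s ∈ Icc 0 h := ⟨hs₀.1.le.trans hs.1, hs.2⟩
    exact mul_nonneg (sin_mul_nonneg_of_mem_Icc hth hs') (hD₀.trans (hD hs' h₁ hs.2))

end HalfPeriod

section SineTransform

variable {f : ℝ → ℝ}

theorem exists_mem_Ioo_lt_of_convexOn {h : ℝ} (hh : 0 < h) (hanti : AntitoneOn f (Ici 0))
    (hconv : ConvexOn ℝ (Ici 0) f) (hf : IntegrableOn f (Ioi 0))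
    (hne : ∫ s in Ioi 0, f s ≠ 0) : ∃ s₀ ∈ Ioo 0 h, f (s₀ + h) < f s₀ := by
  by_contra! hflat
  have hper : ∀ s > 0, f (s + h) = f s := fun s hs => by
    have hmin : 0 < min s (h / 2) := lt_min hs (by positivity)
    have h₁ := hconv.antitoneOn_sub_comp_add hh.le hmin.le hs.le (min_le_left _ _)
    have h₂ := hflat _ ⟨hmin, (min_le_right _ _).trans_lt (by linarith)⟩
    have h₃ := hanti hs.le (show 0 ≤ s + h by linarith) (by linarith)
    dsimp only at h₁
    linarith
  have hconst : ∀ s ∈ Ioi 0, f s = f h := fun s hs =>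
    (hanti.mono Ioi_subset_Ici_self).eq_of_add_eq hh hper hs hh
  have hzero : f h = 0 := by
    simpa using (integrableOn_const_iff (C := f h)).1 (hf.congr_fun hconst measurableSet_Ioi)
  exact hne (by rw [setIntegral_congr_fun measurableSet_Ioi hconst, hzero]; simp)

theorem integral_Ioi_sin_mul_pos {t : ℝ} (ht : 0 < t) (hanti : AntitoneOn f (Ici 0))
    (hconv : ConvexOn ℝ (Ici 0) f) (hf : IntegrableOn f (Ioi 0))
    (hne : ∫ s in Ioi 0, f s ≠ 0) : 0 < ∫ s in Ioi 0, sin (t * s) * f s := by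
  set h := π / t with hh
  have hh₀ : 0 < h := by positivity
  have hth : t * h = π := by rw [hh]; field_simp
  set D : ℝ → ℝ := fun s => f s - f (s + h) with hD
  have hD_nonneg : ∀ s ∈ Ici 0, 0 ≤ D s := fun s (hs : 0 ≤ s) =>
    sub_nonneg.2 (hanti hs (show 0 ≤ s + h by linarith) (by linarith))
  obtain ⟨s₀, hs₀, hlt⟩ := exists_mem_Ioo_lt_of_convexOn hh₀ hanti hconv hf hne
  have hfirst : 0 < ∫ s in (0)..h, sin (t * s) * D s :=
    integral_sin_mul_pos_of_antitoneOn hth ((hconv.antitoneOn_sub_comp_add hh₀.le).mono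
      Icc_subset_Ici_self) (hD_nonneg h hh₀.le) hs₀ (sub_pos.2 hlt)
  have hperiod_nonneg : ∀ k : ℕ, 0 ≤ ∫ s in (0)..h, sin (t * s) * D (s + k * (2 * h)) :=
    fun k => intervalIntegral.integral_nonneg hh₀.le fun s hs =>
      mul_nonneg (sin_mul_nonneg_of_mem_Icc hth hs) (hD_nonneg _ (add_nonneg hs.1 (by positivity)))
  have hfi : ∀ {a b : ℝ}, 0 ≤ a → 0 ≤ b → IntervalIntegrable f volume a b :=
    fun ha hb => (hanti.mono fun s hs => (le_min ha hb).trans hs.1).intervalIntegrable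
  have hsum : ∀ m : ℕ, ∫ s in (0)..m * (2 * h), sin (t * s) * f s
      = ∑ k ∈ Finset.range m, ∫ s in (0)..h, sin (t * s) * D (s + k * (2 * h)) := by
    intro m
    rw [← Finset.sum_congr rfl fun k _ =>
      integral_sin_mul_period hth k (hfi (by positivity) (by positivity))]
    have := intervalIntegral.sum_integral_adjacent_intervals (μ := volume) (n := m)
      (a := fun k : ℕ => (k : ℝ) * (2 * h)) (f := fun s => sin (t * s) * f s)
      (fun k _ => (hfi (by positivity) (by positivity)).continuousOn_mul (by fun_prop))
    simpa using this.symm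
  have hg : IntegrableOn (fun s => sin (t * s) * f s) (Ioi 0) :=
    hf.bdd_mul (c := 1) (by fun_prop)
      (Eventually.of_forall fun s => by simpa using abs_sin_le_one (t * s))
  have hlim := intervalIntegral_tendsto_integral_Ioi 0 hg
    (tendsto_natCast_atTop_atTop.atTop_mul_const (by positivity : 0 < 2 * h))
  refine hfirst.trans_le (ge_of_tendsto hlim (eventually_atTop.2 ⟨1, fun m hm => ?_⟩))
  rw [hsum]
  simpa using Finset.single_le_sum (fun k _ => hperiod_nonneg k) (Finset.mem_range.2 hm)

open Complex in
theorem integral_Ioi_exp_mul_ne_zero (hanti : AntitoneOn f (Ici 0))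
    (hconv : ConvexOn ℝ (Ici 0) f) (hf : IntegrableOn f (Ioi 0)) (hne : ∫ s in Ioi 0, f s ≠ 0)
    (t : ℝ) : ∫ s : ℝ in Ioi 0, exp (I * t * s) * f s ≠ 0 := by
  rcases eq_or_ne t 0 with rfl | ht
  · simpa [integral_complex_ofReal] using hne
  have hint : IntegrableOn (fun s : ℝ => exp (I * t * s) * f s) (Ioi 0) := by
    refine hf.ofReal.bdd_mul (c := 1) (by fun_prop) (Eventually.of_forall fun s => ?_)
    simp [norm_exp]
  have him : (∫ s : ℝ in Ioi 0, exp (I * t * s) * f s).im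
      = ∫ s in Ioi 0, Real.sin (t * s) * f s := by
    rw [← RCLike.im_eq_complex_im, ← integral_im hint]
    congr 1 with s
    rw [show I * t * s = ((t * s : ℝ) : ℂ) * I by push_cast; ring, RCLike.im_eq_complex_im,
      im_mul_ofReal, exp_ofReal_mul_I_im]
  intro h0
  rw [h0, zero_im] at him
  rcases ht.lt_or_gt with ht | ht
  · have := integral_Ioi_sin_mul_pos (neg_pos.2 ht) hanti hconv hf hne
    simp only [neg_mul, Real.sin_neg, integral_neg] at this
    linarith
  · linarith [integral_Ioi_sin_mul_pos ht hanti hconv hf hne]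

end SineTransform

open Complex in
theorem integral_Iic_exp_neg_mul_ne_zero {γ : ℝ → ℝ} (hmono : MonotoneOn γ (Iic 0))
    (hconv : ConvexOn ℝ (Iic 0) γ) (hint : IntegrableOn γ (Iic 0))
    (hne : ∫ z in Iic 0, γ z ≠ 0) (t : ℝ) :
    ∫ z : ℝ in Iic 0, exp (-(I * t * z)) * γ z ≠ 0 := by
  have hrefl := integral_comp_neg_Ioi 0 (fun z : ℝ => exp (-(I * t * z)) * γ z)
  rw [neg_zero] at hrefl
  rw [← neg_zero, ← integral_comp_neg_Ioi] at hne
  rw [← hrefl]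
  simp only [ofReal_neg, mul_neg, neg_neg]
  refine integral_Ioi_exp_mul_ne_zero (f := fun s => γ (-s)) ?_ ?_ ?_ (by simpa using hne) t
  · exact fun x (hx : 0 ≤ x) y (hy : 0 ≤ y) hxy =>
      hmono (neg_nonpos.2 hy) (neg_nonpos.2 hx) (neg_le_neg hxy)
  · refine ⟨convex_Ici 0, fun x (hx : 0 ≤ x) y (hy : 0 ≤ y) a b ha hb hab => ?_⟩
    simpa [neg_add, ← mul_neg, add_comm] using
      hconv.2 (neg_nonpos.2 hx) (neg_nonpos.2 hy) ha hb hab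
  · have h₀ : IntegrableOn γ (Iio (-0)) := by
      rw [neg_zero]
      exact hint.mono_set Iio_subset_Iic_self
    exact h₀.comp_neg_Ioi

theorem stmt12_general (γ : ℝ → ℝ) (ε : ℝ) (hε : 0 < ε) (u : ℝ → ℝ)
    (hsupp : Function.support γ ⊆ Iic 0)
    (hint : Integrable γ)
    (hmass : ∫ z in Iic (0:ℝ), γ z = 1)
    (hmono : MonotoneOn γ (Iic 0))
    (hconv : ConvexOn ℝ (Iic 0) γ)
    (hu1 : Integrable u)
    (γε : ℝ → ℝ) (hγε : ∀ x, γε x = ε⁻¹ * γ (x / ε))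
    (w : ℝ → ℝ) (hw : ∀ x, w x = ∫ y : ℝ, γε (x - y) * u y) :
    (∀ ξ : ℝ,
        (∫ x : ℝ, Complex.exp (-(Complex.I * (ξ:ℂ) * (x:ℂ))) * (w x : ℂ))
          = (∫ z in Iic (0:ℝ),
                Complex.exp (-(Complex.I * (ε:ℂ) * (ξ:ℂ) * (z:ℂ))) * (γ z : ℂ))
            * ∫ x : ℝ, Complex.exp (-(Complex.I * (ξ:ℂ) * (x:ℂ))) * (u x : ℂ)) ∧
    (∀ ξ : ℝ,
        (∫ z in Iic (0:ℝ),
            Complex.exp (-(Complex.I * (ε:ℂ) * (ξ:ℂ) * (z:ℂ))) * (γ z : ℂ)) ≠ 0) ∧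
    ∀ ξ : ℝ,
      (∫ x : ℝ, Complex.exp (-(Complex.I * (ξ:ℂ) * (x:ℂ))) * (u x : ℂ))
        = (∫ x : ℝ, Complex.exp (-(Complex.I * (ξ:ℂ) * (x:ℂ))) * (w x : ℂ))
          / (∫ z in Iic (0:ℝ),
                Complex.exp (-(Complex.I * (ε:ℂ) * (ξ:ℂ) * (z:ℂ))) * (γ z : ℂ)) := by
  have hne : ∀ ξ : ℝ,
      ∫ z in Iic (0:ℝ), Complex.exp (-(Complex.I * ε * ξ * z)) * γ z ≠ 0 := fun ξ => by
    simpa only [Complex.ofReal_mul, mul_assoc] using integral_Iic_exp_neg_mul_ne_zero hmono hconv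
      hint.integrableOn (by rw [hmass]; exact one_ne_zero) (ε * ξ)
  have hmul : ∀ ξ : ℝ, ∫ x : ℝ, Complex.exp (-(Complex.I * ξ * x)) * w x
      = (∫ z in Iic (0:ℝ), Complex.exp (-(Complex.I * ε * ξ * z)) * γ z)
        * ∫ x : ℝ, Complex.exp (-(Complex.I * ξ * x)) * u x := fun ξ => by
    have hγε' : γε = fun x => ε⁻¹ * γ (x / ε) := funext hγε
    have hγε_int : Integrable γε := hγε' ▸ (hint.comp_div hε.ne').const_mul _
    simp only [hw]
    rw [integral_exp_mul_convolution hγε_int hu1, hγε', integral_exp_mul_dilation hε,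
      setIntegral_eq_integral_of_forall_compl_eq_zero fun z hz => ?_]
    rw [Function.notMem_support.1 fun h => hz (hsupp h), Complex.ofReal_zero, mul_zero]
  exact ⟨hmul, hne, fun ξ => by rw [hmul ξ, mul_div_cancel_left₀ _ (hne ξ)]⟩

/-- For a standing kernel `γ`, `u ∈ L¹ ∩ L²(ℝ)` and `w = γ_ε * u`, one has in
the Fourier domain `ŵ(ξ) = ĝ_ε(ξ) û(ξ)` with `ĝ_ε(ξ) = ∫_{-∞}^0 e^{-iεξz} γ(z) dz`, and
`ĝ_ε(ξ) ≠ 0` for every `ξ ∈ ℝ`; hence `û(ξ) = ŵ(ξ)/ĝ_ε(ξ)` for every `ξ`. -/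
theorem stmt12 (γ : ℝ → ℝ) (ε : ℝ) (hε : 0 < ε) (u : ℝ → ℝ)
    (hγpos : ∀ z, 0 ≤ γ z)
    (hsupp : Function.support γ ⊆ Iic 0)
    (hint : Integrable γ)
    (hmass : ∫ z in Iic (0:ℝ), γ z = 1)
    (hmom : Integrable (fun z => |z| * γ z))
    (hmono : MonotoneOn γ (Iic 0))
    (hconv : ConvexOn ℝ (Iic 0) γ)
    (hBV : eVariationOn γ univ ≠ ⊤)
    (hu2 : MemLp u 2 (volume : Measure ℝ))
    (hu1 : Integrable u)
    (γε : ℝ → ℝ) (hγε : ∀ x, γε x = ε⁻¹ * γ (x / ε))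
    (w : ℝ → ℝ) (hw : ∀ x, w x = ∫ y : ℝ, γε (x - y) * u y) :
    (∀ ξ : ℝ,
        (∫ x : ℝ, Complex.exp (-(Complex.I * (ξ:ℂ) * (x:ℂ))) * (w x : ℂ))
          = (∫ z in Iic (0:ℝ),
                Complex.exp (-(Complex.I * (ε:ℂ) * (ξ:ℂ) * (z:ℂ))) * (γ z : ℂ))
            * ∫ x : ℝ, Complex.exp (-(Complex.I * (ξ:ℂ) * (x:ℂ))) * (u x : ℂ)) ∧
    (∀ ξ : ℝ,
        (∫ z in Iic (0:ℝ),
            Complex.exp (-(Complex.I * (ε:ℂ) * (ξ:ℂ) * (z:ℂ))) * (γ z : ℂ)) ≠ 0) ∧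
    ∀ ξ : ℝ,
      (∫ x : ℝ, Complex.exp (-(Complex.I * (ξ:ℂ) * (x:ℂ))) * (u x : ℂ))
        = (∫ x : ℝ, Complex.exp (-(Complex.I * (ξ:ℂ) * (x:ℂ))) * (w x : ℂ))
          / (∫ z in Iic (0:ℝ),
                Complex.exp (-(Complex.I * (ε:ℂ) * (ξ:ℂ) * (z:ℂ))) * (γ z : ℂ)) :=
  stmt12_general γ ε hε u hsupp hint hmass hmono hconv hu1 γε hγε w hw
end

section
/- Let u_ε(t,·) ∈ L²(ℝ) with 0 ≤ u_ε ≤ 1 and w_ε = γ_ε * u_ε, where γ satisfies the standing kernel assumptions, and suppose TV(w_ε(t,·)) ≤ TV(u_0). Then |∫_ℝ u_ε(t,x) ∂_x w_ε(t,x) dx| ≤ TV(w_ε(t,·)) ≤ TV(u_0), and consequently ∫_{-∞}^0 ρ_ε(t,s) γ'_ε(ds) ≤ 2 TV(u_0) where ρ_ε(t,s) = ∫ (u_ε(t,x-s) - u_ε(t,x))² dx. -/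
open MeasureTheory Filter Set Topology

open scoped ENNReal

/-!
Tiling ℝ by intervals of length `h` shows `∫ |w(x+h) - w(x)| dx ≤ h · TV(w)`, so by Fatou
`∫ |w'| ≤ TV(w)`, which bounds `|∫ u w'|` when `|u| ≤ 1`. Expanding the square and using Fubini,
`∫ ρ dμ = 2 μ(ℝ) ∫ u² - 2 ∫ u (u ⋆ μ)` with `(u ⋆ μ)(x) = ∫ u(x - s) dμ(s)`, while
`∫ u ∂ₓw = ∫ u (u ⋆ μ) - γ_ε(0) ∫ u²`. Since `μ(a, 0] = γ_ε(0) - γ_ε(a)` and `γ_ε ≥ 0`,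
`μ(ℝ) ≤ γ_ε(0)`, hence `∫ ρ dμ ≤ -2 ∫ u ∂ₓw ≤ 2 TV(w)`.
-/

theorem tsum_edist_le_eVariationOn_of_monotone {α E : Type*} [LinearOrder α]
    [PseudoEMetricSpace E] (f : α → E) {v : ℤ → α} (hv : Monotone v) :
    ∑' k, edist (f (v (k + 1))) (f (v k)) ≤ eVariationOn f univ := by
  rw [ENNReal.tsum_eq_iSup_sum]
  refine iSup_le fun F => ?_
  obtain ⟨N, hN⟩ : ∃ N : ℕ, ∀ k ∈ F, k.natAbs ≤ N :=
    ⟨F.sup Int.natAbs, fun k hk => Finset.le_sup hk⟩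
  have hshift : Monotone fun i : ℕ => v (i - N) := hv.comp fun i j hij => by
    simpa using hij
  calc ∑ k ∈ F, edist (f (v (k + 1))) (f (v k))
      ≤ ∑ k ∈ (Finset.range (2 * N + 1)).image (fun i : ℕ => (i : ℤ) - N),
          edist (f (v (k + 1))) (f (v k)) := by
        refine Finset.sum_le_sum_of_subset fun k hk => Finset.mem_image.2 ⟨(k + N).toNat, ?_, ?_⟩
        · have := hN k hk
          simp only [Finset.mem_range]
          omega
        · have := hN k hk
          omega
    _ = ∑ i ∈ Finset.range (2 * N + 1), edist (f (v ((i + 1 : ℕ) - N))) (f (v (i - N))) := by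
        rw [Finset.sum_image fun i _ j _ hij => by simpa using hij]
        push_cast
        simp only [sub_add_eq_add_sub]
    _ ≤ eVariationOn f univ := eVariationOn.sum_le hshift fun _ => mem_univ _

theorem lintegral_edist_add_le_mul_eVariationOn {w : ℝ → ℝ} (hw : Measurable w) {h : ℝ}
    (hh : 0 < h) :
    ∫⁻ x, edist (w (x + h)) (w x) ≤ ENNReal.ofReal h * eVariationOn w univ := by
  set f : ℝ → ℝ≥0∞ := fun x => edist (w (x + h)) (w x)
  have hf : Measurable f := (hw.comp (measurable_add_const h)).edist hw
  calc ∫⁻ x, f x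
      = ∑' n : ℤ, ∫⁻ x in Ico (n • h) ((n + 1) • h), f x := by
        rw [← lintegral_iUnion (fun n => measurableSet_Ico) (pairwise_disjoint_Ico_zsmul h),
          iUnion_Ico_zsmul hh, setLIntegral_univ]
    _ = ∑' n : ℤ, ∫⁻ x in Ico 0 h, f (x + n • h) := by
        refine tsum_congr fun n => ?_
        rw [← (measurePreserving_add_right volume (n • h)).setLIntegral_comp_preimage_emb
          (measurableEmbedding_addRight _)]
        congr 2
        ext x
        simp only [mem_preimage, mem_Ico, add_zsmul, one_zsmul]
        constructor <;> rintro ⟨h1, h2⟩ <;> constructor <;> linarith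
    _ = ∫⁻ x in Ico 0 h, ∑' n : ℤ, f (x + n • h) :=
        (lintegral_tsum fun n => (hf.comp (measurable_add_const _)).aemeasurable).symm
    _ ≤ ∫⁻ _ in Ico 0 h, eVariationOn w univ := by
        refine lintegral_mono fun x => ?_
        have hv : Monotone fun k : ℤ => x + k • h := fun i j hij => by
          simpa using zsmul_le_zsmul_left hh.le hij
        convert tsum_edist_le_eVariationOn_of_monotone w hv using 3 with n
        simp only [f, add_zsmul, one_zsmul, add_assoc]
    _ = ENNReal.ofReal h * eVariationOn w univ := by
        rw [setLIntegral_const, Real.volume_Ico, sub_zero, mul_comm]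

theorem lintegral_enorm_difference_quotient_le_eVariationOn {w : ℝ → ℝ} (hw : Measurable w)
    {h : ℝ} (hh : 0 < h) :
    ∫⁻ x, ‖h⁻¹ * (w (x + h) - w x)‖ₑ ≤ eVariationOn w univ := by
  have hdist : ∀ x, ‖h⁻¹ * (w (x + h) - w x)‖ₑ = ENNReal.ofReal h⁻¹ * edist (w (x + h)) (w x) := by
    intro x
    rw [enorm_mul, edist_eq_enorm_sub, Real.enorm_of_nonneg (inv_nonneg.2 hh.le)]
  calc ∫⁻ x, ‖h⁻¹ * (w (x + h) - w x)‖ₑ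
      = ENNReal.ofReal h⁻¹ * ∫⁻ x, edist (w (x + h)) (w x) := by
        simp_rw [hdist]
        exact lintegral_const_mul _ ((hw.comp (measurable_add_const h)).edist hw)
    _ ≤ ENNReal.ofReal h⁻¹ * (ENNReal.ofReal h * eVariationOn w univ) := by
        gcongr
        exact lintegral_edist_add_le_mul_eVariationOn hw hh
    _ = eVariationOn w univ := by
        rw [← mul_assoc, ← ENNReal.ofReal_mul (inv_nonneg.2 hh.le), inv_mul_cancel₀ hh.ne',
          ENNReal.ofReal_one, one_mul]

theorem lintegral_enorm_le_eVariationOn_of_hasDerivAt {w w' : ℝ → ℝ}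
    (hw : ∀ x, HasDerivAt w (w' x) x) :
    ∫⁻ x, ‖w' x‖ₑ ≤ eVariationOn w univ := by
  have hwm : Measurable w := (continuous_iff_continuousAt.2 fun x => (hw x).continuousAt).measurable
  have hlim : ∀ x, Tendsto (fun t => ‖t⁻¹ * (w (x + t) - w x)‖ₑ) (𝓝[>] 0) (𝓝 ‖w' x‖ₑ) :=
    fun x => continuous_enorm.continuousAt.tendsto.comp (hw x).tendsto_slope_zero_right
  calc ∫⁻ x, ‖w' x‖ₑ
      = ∫⁻ x, liminf (fun t => ‖t⁻¹ * (w (x + t) - w x)‖ₑ) (𝓝[>] 0) :=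
        lintegral_congr fun x => (hlim x).liminf_eq.symm
    _ ≤ liminf (fun t => ∫⁻ x, ‖t⁻¹ * (w (x + t) - w x)‖ₑ) (𝓝[>] 0) :=
        lintegral_liminf_le fun t =>
          (measurable_const.mul ((hwm.comp (measurable_add_const t)).sub hwm)).enorm
    _ ≤ eVariationOn w univ :=
        liminf_le_of_frequently_le' (Eventually.frequently (eventually_mem_nhdsWithin.mono
          fun _ ht => lintegral_enorm_difference_quotient_le_eVariationOn hwm ht))

theorem abs_integral_mul_le_eVariationOn {u w w' : ℝ → ℝ} (hu : ∀ x, |u x| ≤ 1)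
    (hw : ∀ x, HasDerivAt w (w' x) x) (hV : eVariationOn w univ ≠ ⊤) :
    |∫ x, u x * w' x| ≤ (eVariationOn w univ).toReal := by
  have hle : ‖∫ x, u x * w' x‖ₑ ≤ eVariationOn w univ :=
    calc ‖∫ x, u x * w' x‖ₑ ≤ ∫⁻ x, ‖u x * w' x‖ₑ := enorm_integral_le_lintegral_enorm _
      _ ≤ ∫⁻ x, ‖w' x‖ₑ := lintegral_mono fun x => by
          rw [enorm_mul]
          exact mul_le_of_le_one_left' (by simpa [← ofReal_norm] using hu x)
      _ ≤ eVariationOn w univ := lintegral_enorm_le_eVariationOn_of_hasDerivAt hw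
  simpa using ENNReal.toReal_mono hV hle

section Symmetrization

variable {G : Type*} [MeasurableSpace G] [AddGroup G] [MeasurableAdd₂ G]
  {ν : Measure G} [ν.IsAddRightInvariant] {u : G → ℝ}

theorem integral_sq_sub_comp_sub_right (hu : MemLp u 2 ν) (s : G) :
    ∫ x, (u (x - s) - u x) ^ 2 ∂ν = 2 * ∫ x, u x ^ 2 ∂ν - 2 * ∫ x, u x * u (x - s) ∂ν := by
  have hus : MemLp (fun x => u (x - s)) 2 ν :=
    hu.comp_measurePreserving (measurePreserving_sub_right ν s)
  have hsq : Integrable (fun x => u x ^ 2) ν := hu.integrable_sq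
  have hmul : Integrable (fun x => u x * u (x - s)) ν := hu.integrable_mul hus
  have hexpand : (fun x => (u (x - s) - u x) ^ 2)
      = fun x => (u (x - s) ^ 2 + u x ^ 2) - 2 * (u x * u (x - s)) := by
    funext x; ring
  have hsum : Integrable (fun x => u (x - s) ^ 2 + u x ^ 2) ν := hus.integrable_sq.add hsq
  rw [hexpand, integral_sub hsum (hmul.const_mul 2),
    integral_add hus.integrable_sq hsq, integral_const_mul,
    integral_sub_right_eq_self (fun x => u x ^ 2) s]
  ring

variable [MeasurableNeg G] [SFinite ν]

theorem integrable_mul_comp_sub_prod (hu : MemLp u 2 ν) (μ : Measure G) [IsFiniteMeasure μ] :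
    Integrable (fun p : G × G => u p.1 * u (p.1 - p.2)) (ν.prod μ) := by
  have hsq : Integrable (fun p : G × G => u p.1 ^ 2) (ν.prod μ) := hu.integrable_sq.comp_fst μ
  have hshear := measurePreserving_sub_prod (G := G) ν μ
  have hsq' : Integrable (fun p : G × G => u (p.1 - p.2) ^ 2) (ν.prod μ) :=
    hshear.integrable_comp_of_integrable hsq
  have hmeas : AEStronglyMeasurable (fun p : G × G => u p.1 * u (p.1 - p.2)) (ν.prod μ) :=
    hu.1.comp_fst.mul (hu.1.comp_fst.comp_measurePreserving hshear)
  refine (hsq.add hsq').mono' hmeas (Eventually.of_forall fun p => ?_)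
  rw [Pi.add_apply, Real.norm_eq_abs, abs_mul]
  nlinarith [two_mul_le_add_sq |u p.1| |u (p.1 - p.2)|, sq_abs (u p.1), sq_abs (u (p.1 - p.2)),
    abs_nonneg (u p.1), abs_nonneg (u (p.1 - p.2))]

theorem integrable_mul_integral_comp_sub (hu : MemLp u 2 ν) (μ : Measure G)
    [IsFiniteMeasure μ] : Integrable (fun x => u x * ∫ s, u (x - s) ∂μ) ν := by
  simpa only [integral_const_mul] using (integrable_mul_comp_sub_prod hu μ).integral_prod_left

theorem integral_integral_sq_sub_comp_sub (hu : MemLp u 2 ν) (μ : Measure G)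
    [IsFiniteMeasure μ] :
    ∫ s, (∫ x, (u (x - s) - u x) ^ 2 ∂ν) ∂μ
      = 2 * (μ.real univ * ∫ x, u x ^ 2 ∂ν - ∫ x, u x * ∫ s, u (x - s) ∂μ ∂ν) := by
  have hprod := integrable_mul_comp_sub_prod hu μ
  have hfub : ∫ s, (∫ x, u x * u (x - s) ∂ν) ∂μ = ∫ x, (∫ s, u x * u (x - s) ∂μ) ∂ν :=
    (integral_integral_swap hprod).symm
  simp_rw [integral_sq_sub_comp_sub_right hu]
  rw [integral_sub (integrable_const _) (hprod.integral_prod_right.const_mul 2), integral_const,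
    integral_const_mul, hfub]
  simp only [integral_const_mul, smul_eq_mul]
  ring

end Symmetrization

theorem measureReal_univ_le_of_measureReal_Ioc_le {μ : Measure ℝ} [IsFiniteMeasure μ] {b C : ℝ}
    (hb : μ (Ioi b) = 0) (hC : ∀ a ≤ b, μ.real (Ioc a b) ≤ C) : μ.real univ ≤ C := by
  have hC0 : 0 ≤ C := by simpa using hC b le_rfl
  have hIic : μ (Iic b) ≤ ENNReal.ofReal C :=
    le_of_tendsto (tendsto_measure_Ioc_atBot μ b) <| (eventually_le_atBot b).mono fun a ha =>
      (ENNReal.le_ofReal_iff_toReal_le (measure_ne_top _ _) hC0).2 (hC a ha)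
  have huniv : μ univ ≤ μ (Iic b) := by
    simpa [hb] using measure_union_le (μ := μ) (Iic b) (Ioi b)
  exact ENNReal.toReal_le_of_le_ofReal hC0 (huniv.trans hIic)

theorem stmt19_general (γ u0 : ℝ → ℝ) (ε : ℝ) (hε : 0 < ε) (u : ℝ → ℝ)
    (hγpos : ∀ z, 0 ≤ γ z)
    (hu2 : MemLp u 2 (volume : Measure ℝ))
    (hub : ∀ x, u x ∈ Icc (0:ℝ) 1)
    (hu0BV : eVariationOn u0 univ ≠ ⊤)
    (γε : ℝ → ℝ) (hγε : ∀ x, γε x = ε⁻¹ * γ (x / ε))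
    (μ : Measure ℝ) [IsFiniteMeasure μ]
    (hμsupp : μ (Ioi 0) = 0)
    (hderiv : ∀ a : ℝ, a ≤ 0 → γε 0 - γε a = (μ (Ioc a 0)).toReal)
    (w Dw : ℝ → ℝ)
    (hDw : ∀ x, Dw x = (∫ s : ℝ, u (x - s) ∂μ) - γε 0 * u x)
    (hderivw : ∀ x, HasDerivAt w (Dw x) x)
    (hwBV : eVariationOn w univ ≠ ⊤)
    (hTV : eVariationOn w univ ≤ eVariationOn u0 univ) :
    |∫ x : ℝ, u x * Dw x| ≤ (eVariationOn w univ).toReal ∧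
    (eVariationOn w univ).toReal ≤ (eVariationOn u0 univ).toReal ∧
    ∫ s : ℝ, (∫ x : ℝ, (u (x - s) - u x)^2) ∂μ
      ≤ 2 * (eVariationOn u0 univ).toReal := by
  have hTVw : |∫ x, u x * Dw x| ≤ (eVariationOn w univ).toReal :=
    abs_integral_mul_le_eVariationOn (fun x => abs_le.2 ⟨by linarith [(hub x).1], (hub x).2⟩)
      hderivw hwBV
  have hTVu0 := ENNReal.toReal_mono hu0BV hTV
  refine ⟨hTVw, hTVu0, ?_⟩
  have hμ_mass : μ.real univ ≤ γε 0 :=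
    measureReal_univ_le_of_measureReal_Ioc_le hμsupp fun a ha => by
      have : 0 ≤ γε a := by rw [hγε]; exact mul_nonneg (inv_nonneg.2 hε.le) (hγpos _)
      rw [measureReal_def, ← hderiv a ha]
      linarith
  have hDw_split : ∫ x, u x * Dw x
      = (∫ x, u x * ∫ s, u (x - s) ∂μ) - γε 0 * ∫ x, u x ^ 2 := by
    rw [← integral_const_mul, ← integral_sub (integrable_mul_integral_comp_sub hu2 μ)
      (hu2.integrable_sq.const_mul _)]
    congr 1 with x
    rw [hDw]
    ring
  have hsq : 0 ≤ ∫ x, u x ^ 2 := integral_nonneg fun x => sq_nonneg _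
  rw [integral_integral_sq_sub_comp_sub hu2 μ]
  linarith [mul_le_mul_of_nonneg_right hμ_mass hsq, neg_abs_le (∫ x, u x * Dw x)]

/-- Let `u ∈ L²(ℝ)` with `0 ≤ u ≤ 1` and `w = γ_ε * u` for a standing kernel,
with the Volterra derivative `Dw = γ'_ε * u - γ_ε(0) u` (here `μ` is the derivative measure
of `γ_ε`), and suppose `TV(w) ≤ TV(u₀)`. Then `|∫ u ∂ₓw dx| ≤ TV(w) ≤ TV(u₀)`, and
consequently `∫ ρ(s) γ'_ε(ds) ≤ 2 TV(u₀)` where `ρ(s) = ∫ (u(x-s) - u(x))² dx`. -/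
theorem stmt19 (γ u0 : ℝ → ℝ) (ε : ℝ) (hε : 0 < ε) (u : ℝ → ℝ)
    (hγpos : ∀ z, 0 ≤ γ z)
    (hsupp : Function.support γ ⊆ Iic 0)
    (hint : Integrable γ)
    (hmass : ∫ z in Iic (0:ℝ), γ z = 1)
    (hmono : MonotoneOn γ (Iic 0))
    (hconv : ConvexOn ℝ (Iic 0) γ)
    (hBV : eVariationOn γ univ ≠ ⊤)
    (hu2 : MemLp u 2 (volume : Measure ℝ))
    (hub : ∀ x, u x ∈ Icc (0:ℝ) 1)
    (hu0BV : eVariationOn u0 univ ≠ ⊤)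
    (γε : ℝ → ℝ) (hγε : ∀ x, γε x = ε⁻¹ * γ (x / ε))
    (μ : Measure ℝ) [IsFiniteMeasure μ]
    (hμsupp : μ (Ioi 0) = 0)
    (hderiv : ∀ a : ℝ, a ≤ 0 → γε 0 - γε a = (μ (Ioc a 0)).toReal)
    (w Dw : ℝ → ℝ)
    (hw : ∀ x, w x = ∫ y : ℝ, γε (x - y) * u y)
    (hDw : ∀ x, Dw x = (∫ s : ℝ, u (x - s) ∂μ) - γε 0 * u x)
    (hderivw : ∀ x, HasDerivAt w (Dw x) x)
    (hwBV : eVariationOn w univ ≠ ⊤)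
    (hTV : eVariationOn w univ ≤ eVariationOn u0 univ) :
    |∫ x : ℝ, u x * Dw x| ≤ (eVariationOn w univ).toReal ∧
    (eVariationOn w univ).toReal ≤ (eVariationOn u0 univ).toReal ∧
    ∫ s : ℝ, (∫ x : ℝ, (u (x - s) - u x)^2) ∂μ
      ≤ 2 * (eVariationOn u0 univ).toReal :=
  stmt19_general γ u0 ε hε u hγpos hu2 hub hu0BV γε hγε μ hμsupp hderiv w Dw hDw hderivw hwBV hTV
end
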